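/- The Blanuša functions satisfy ψ̂₁(u)² + ψ̂₂(u)² = 1 for every u ∈ ℝ. -/

import Mathlib

open scoped Classical

/-- The function `ξ` defined by `ξ(u) = sin(πu)·exp(−1/sin²(πu))` for `u ∉ ℤ`
and `ξ(u) = 0` for `u ∈ ℤ`. -/
noncomputable def xi (u : ℝ) : ℝ :=
  if ∃ m : ℤ, u = (m : ℝ) then 0
  else Real.sin (Real.pi * u) * Real.exp (-1 / (Real.sin (Real.pi * u)) ^ 2)

/-- `A = ∫₀¹ ξ(τ) dτ`. -/
noncomputable def A : ℝ := ∫ τ in (0 : ℝ)..1, xi τ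

/-- Blanuša's first function `ψ̂₁(u) = √((1/A)∫₀^{u+1} ξ(τ)dτ)`. -/
noncomputable def psihat1 (u : ℝ) : ℝ :=
  Real.sqrt ((1 / A) * ∫ τ in (0 : ℝ)..(u + 1), xi τ)

/-- Blanuša's second function `ψ̂₂(u) = √((1/A)∫₀^{u} ξ(τ)dτ)`. -/
noncomputable def psihat2 (u : ℝ) : ℝ :=
  Real.sqrt ((1 / A) * ∫ τ in (0 : ℝ)..u, xi τ)

/-!
Since `sin (π (u + 1)) = -sin (π u)`, `ξ` is antiperiodic with antiperiod `1`, so the primitive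
`F u = ∫₀^u ξ` satisfies `F (u + 1) = A - F u`. Hence `ψ̂₁(u)² + ψ̂₂(u)² = (A - F u + F u) / A = 1`,
as soon as both radicands are nonnegative, i.e. `0 ≤ F u ≤ A`. This holds on `[0, 1]` because
`ξ ≥ 0` there, and everywhere because `F (A - F)` is `1`-periodic.
-/

open MeasureTheory intervalIntegral Set Function

namespace Function.Antiperiodic

theorem intervalIntegral_add_eq_sub {E : Type*} [NormedAddCommGroup E] [NormedSpace ℝ E]
    {f : ℝ → E} {c : ℝ} (hf : Antiperiodic f c) (hint : ∀ a b, IntervalIntegrable f volume a b)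
    (a b : ℝ) : ∫ x in a..b + c, f x = (∫ x in a..a + c, f x) - ∫ x in a..b, f x := by
  rw [← integral_add_adjacent_intervals (hint a (a + c)) (hint (a + c) (b + c)),
    ← integral_comp_add_right]
  simp only [show ∀ x, f (x + c) = -f x from hf, intervalIntegral.integral_neg, sub_eq_add_neg]

theorem intervalIntegral_mem_Icc {f : ℝ → ℝ} {c : ℝ} (hf : Antiperiodic f c) (hc : 0 < c)
    (hint : ∀ a b, IntervalIntegrable f volume a b) {a : ℝ}
    (hnonneg : ∀ x ∈ Icc a (a + c), 0 ≤ f x) (u : ℝ) :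
    ∫ x in a..u, f x ∈ Icc 0 (∫ x in a..a + c, f x) := by
  set F : ℝ → ℝ := fun u ↦ ∫ x in a..u, f x
  set I := ∫ x in a..a + c, f x
  have hF_add (u : ℝ) : F (u + c) = I - F u := hf.intervalIntegral_add_eq_sub hint a u
  have hnonneg_ae : 0 ≤ᵐ[volume.restrict (Ioc a (a + c))] f :=
    (ae_restrict_mem measurableSet_Ioc).mono fun x hx ↦ hnonneg x (Ioc_subset_Icc_self hx)
  have hF_Icc : ∀ y ∈ Icc a (a + c), F y ∈ Icc 0 I := fun y hy ↦
    ⟨integral_nonneg hy.1 fun x hx ↦ hnonneg x ⟨hx.1, hx.2.trans hy.2⟩,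
      integral_mono_interval le_rfl hy.1 hy.2 hnonneg_ae (hint a (a + c))⟩
  have hI : 0 ≤ I := (hF_Icc (a + c) ⟨by linarith, le_rfl⟩).1
  -- `u ↦ u + c` exchanges `F` and `I - F`, so `F (I - F)` is `c`-periodic.
  have hg : Periodic (fun u ↦ F u * (I - F u)) c := fun u ↦ by
    simp only [hF_add]; ring
  obtain ⟨y, hy, hgy⟩ := hg.exists_mem_Ico hc u a
  obtain ⟨hy0, hyI⟩ := hF_Icc y (Ico_subset_Icc_self hy)
  have hg_nonneg : 0 ≤ F u * (I - F u) := hgy ▸ mul_nonneg hy0 (sub_nonneg.2 hyI)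
  constructor <;> nlinarith

end Function.Antiperiodic

theorem xi_antiperiodic : Antiperiodic xi 1 := fun u ↦ by
  have h_int_shift : (∃ m : ℤ, u + 1 = m) ↔ ∃ m : ℤ, u = m :=
    ⟨fun ⟨m, h⟩ ↦ ⟨m - 1, by push_cast; linarith⟩, fun ⟨m, h⟩ ↦ ⟨m + 1, by push_cast; linarith⟩⟩
  have hsin : Real.sin (Real.pi * (u + 1)) = -Real.sin (Real.pi * u) := by
    rw [mul_add_one, Real.sin_add_pi]
  unfold xi
  split_ifs <;> simp_all

theorem measurable_xi : Measurable xi := by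
  refine Measurable.ite ?_ (by fun_prop) (by fun_prop)
  have : {u : ℝ | ∃ m : ℤ, u = m} = range ((↑) : ℤ → ℝ) := by
    ext u; simp [eq_comm]
  exact this ▸ (countable_range _).measurableSet

theorem norm_xi_le_one (u : ℝ) : ‖xi u‖ ≤ 1 := by
  unfold xi
  split_ifs
  · simp
  · rw [norm_mul, Real.norm_of_nonneg (Real.exp_nonneg _), Real.norm_eq_abs]
    exact mul_le_one₀ (Real.abs_sin_le_one _) (Real.exp_nonneg _)
      (Real.exp_le_one_iff.2 (div_nonpos_of_nonpos_of_nonneg (by norm_num) (sq_nonneg _)))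

theorem xi_intervalIntegrable (a b : ℝ) : IntervalIntegrable xi volume a b :=
  intervalIntegrable_iff.2 <| Measure.integrableOn_of_bounded measure_Ioc_lt_top.ne
    measurable_xi.aestronglyMeasurable (.of_forall norm_xi_le_one)

theorem xi_nonneg_of_mem_Icc {u : ℝ} (hu : u ∈ Icc 0 1) : 0 ≤ xi u := by
  have hsin : 0 ≤ Real.sin (Real.pi * u) :=
    Real.sin_nonneg_of_nonneg_of_le_pi (by nlinarith [hu.1, Real.pi_pos])
      (by nlinarith [hu.2, Real.pi_pos])
  unfold xi
  split_ifs <;> positivity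

theorem xi_pos_of_mem_Ioo {u : ℝ} (hu : u ∈ Ioo 0 1) : 0 < xi u := by
  have hsin : 0 < Real.sin (Real.pi * u) :=
    Real.sin_pos_of_pos_of_lt_pi (by nlinarith [hu.1, Real.pi_pos])
      (by nlinarith [hu.2, Real.pi_pos])
  have h_not_int : ¬∃ m : ℤ, u = m := by
    rintro ⟨m, rfl⟩
    have h0 : 0 < m := by exact_mod_cast hu.1
    have h1 : m < 1 := by exact_mod_cast hu.2
    omega
  rw [xi, if_neg h_not_int]
  positivity

theorem A_pos : 0 < A :=
  intervalIntegral_pos_of_pos_on (xi_intervalIntegrable 0 1) (fun _ ↦ xi_pos_of_mem_Ioo) one_pos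

/-- The Blanuša functions satisfy `ψ̂₁(u)² + ψ̂₂(u)² = 1` for every `u ∈ ℝ`. -/
theorem psihat_sq_add_sq :
    ∀ u : ℝ, psihat1 u ^ 2 + psihat2 u ^ 2 = 1 := by
  intro u
  have hA : 0 < A := A_pos
  have h_add_one : ∫ τ in (0 : ℝ)..u + 1, xi τ = A - ∫ τ in (0 : ℝ)..u, xi τ := by
    simpa [A] using xi_antiperiodic.intervalIntegral_add_eq_sub xi_intervalIntegrable 0 u
  obtain ⟨h_nonneg, h_le⟩ : ∫ τ in (0 : ℝ)..u, xi τ ∈ Icc 0 A := by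
    simpa [A] using xi_antiperiodic.intervalIntegral_mem_Icc one_pos xi_intervalIntegrable (a := 0)
      (fun x hx ↦ xi_nonneg_of_mem_Icc (by simpa using hx)) u
  rw [psihat1, psihat2, h_add_one, Real.sq_sqrt (mul_nonneg (by positivity) (sub_nonneg.2 h_le)),
    Real.sq_sqrt (mul_nonneg (by positivity) h_nonneg)]
  field_simp
  ring
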